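/- arXiv:1805.10597 — 3 statements merged into one kernel-verified Lean document; each statement's English description precedes it below -/
import Mathlib

section
/- Let β ∈ [0,1/2), γ ∈ (β, 1-β), λ > 0, C₁, C₂ > 0, and real α₀ < α*. Suppose u, v, w : [0,(α*-α₀)/λ) → B_{α*} satisfy ‖w‖^{(γ+1-β)} < ∞, where for κ > 0, ‖w‖^{(κ)} = sup_{α∈(α₀,α*], 0≤t<(α-α₀)/λ} (α-α₀-λt)^κ ‖w(t)‖_α. Suppose U(t,s) are linear operators with ‖U(t,s)y‖_α ≤ C₁ (α-α')^{-β} ‖y‖_{α'} for α' < α. Then the function t ↦ ∫₀ᵗ U(t,s) w(s) ds satisfies ‖∫₀^• U(·,s) w(s) ds‖^{(γ)} ≤ (2^γ C₁ / ((γ-β) λ)) · ‖w‖^{(γ+1-β)}. -/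
/-!
Pass through the intermediate index `α' = α - d / 2`, where `d = α - α₀ - lam t`. The evolution
bound costs `C₁ (d / 2) ^ (-β)`, and on `[0, t]` we have
`N α' (w s) ≤ M (α' - α₀ - lam s) ^ (-(γ + 1 - β))`; since `γ - β > 0`, the integral of this
majorant is at most `M (d / 2) ^ (-(γ - β)) / ((γ - β) lam)`. Multiplying by `d ^ γ` leaves
`2 ^ γ C₁ M / ((γ - β) lam)`.
-/

open Set MeasureTheory

lemma le_mul_rpow_neg_of_rpow_mul_le {x κ y M : ℝ} (hx : 0 < x) (h : x ^ κ * y ≤ M) :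
    y ≤ M * x ^ (-κ) := by
  rwa [Real.rpow_neg hx.le, ← div_eq_mul_inv, le_div_iff₀ (Real.rpow_pos_of_pos hx κ), mul_comm]

lemma integral_sub_mul_rpow_neg_succ {a lam q t : ℝ} (hlam : 0 < lam) (hq : 0 < q) (ht : 0 ≤ t)
    (hat : 0 < a - lam * t) :
    ∫ s in (0:ℝ)..t, (a - lam * s) ^ (-(q + 1)) =
      ((a - lam * t) ^ (-q) - a ^ (-q)) / (q * lam) := by
  have hzero : (0:ℝ) ∉ uIcc (a - lam * t) (a - lam * 0) := by
    rw [uIcc_of_le (by nlinarith)]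
    exact fun h => hat.not_ge h.1
  rw [intervalIntegral.integral_comp_sub_mul (fun x => x ^ (-(q + 1))) hlam.ne',
    integral_rpow (Or.inr ⟨by linarith, hzero⟩),
    show -(q + 1) + 1 = -q by ring, mul_zero, sub_zero, smul_eq_mul]
  field_simp
  ring

lemma intervalIntegrable_sub_mul_rpow {a lam r t : ℝ} (hlam : 0 < lam) (ht : 0 ≤ t)
    (hat : 0 < a - lam * t) :
    IntervalIntegrable (fun s => (a - lam * s) ^ r) volume 0 t := by
  refine ContinuousOn.intervalIntegrable (ContinuousOn.rpow_const (by fun_prop) fun s hs => ?_)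
  rw [uIcc_of_le ht] at hs
  left
  nlinarith [hs.2]

lemma integral_le_of_weighted_bound {f g : ℝ → ℝ} {a lam q t K M : ℝ} (hlam : 0 < lam)
    (hq : 0 < q) (ht : 0 ≤ t) (hat : 0 < a - lam * t) (hK : 0 ≤ K) (hM : 0 ≤ M)
    (hf : IntervalIntegrable f volume 0 t) (hfg : ∀ s ∈ Icc 0 t, f s ≤ K * g s)
    (hg : ∀ s ∈ Icc 0 t, (a - lam * s) ^ (q + 1) * g s ≤ M) :
    ∫ s in (0:ℝ)..t, f s ≤ K * M * ((a - lam * t) ^ (-q) / (q * lam)) := by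
  have hpos : ∀ s ∈ Icc 0 t, 0 < a - lam * s := fun s hs => by nlinarith [hs.2]
  have ha : 0 < a := by simpa using hpos 0 ⟨le_rfl, ht⟩
  calc ∫ s in (0:ℝ)..t, f s
      ≤ ∫ s in (0:ℝ)..t, K * M * (a - lam * s) ^ (-(q + 1)) := by
        refine intervalIntegral.integral_mono_on ht hf
          ((intervalIntegrable_sub_mul_rpow hlam ht hat).const_mul _) fun s hs => ?_
        calc f s ≤ K * g s := hfg s hs
          _ ≤ K * (M * (a - lam * s) ^ (-(q + 1))) :=
            mul_le_mul_of_nonneg_left (le_mul_rpow_neg_of_rpow_mul_le (hpos s hs) (hg s hs)) hK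
          _ = K * M * (a - lam * s) ^ (-(q + 1)) := by ring
    _ = K * M * (((a - lam * t) ^ (-q) - a ^ (-q)) / (q * lam)) := by
        rw [intervalIntegral.integral_const_mul, integral_sub_mul_rpow_neg_succ hlam hq ht hat]
    _ ≤ K * M * ((a - lam * t) ^ (-q) / (q * lam)) := by
        gcongr
        linarith [Real.rpow_nonneg ha.le (-q)]

lemma rpow_mul_half_rpow_neg {d β γ : ℝ} (hd : 0 < d) :
    d ^ γ * ((d / 2) ^ (-β) * (d / 2) ^ (-(γ - β))) = 2 ^ γ := by
  have hd2 : 0 < d / 2 := by positivity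
  rw [← Real.rpow_add hd2, show -β + -(γ - β) = -γ by ring, Real.rpow_neg hd2.le,
    Real.div_rpow hd.le zero_le_two]
  field_simp [(Real.rpow_pos_of_pos hd γ).ne']

theorem stmt7_general (E : Type*) [NormedAddCommGroup E] [NormedSpace ℝ E]
    (N : ℝ → E → ℝ) (β γ lam C₁ α₀ αs M : ℝ)
    (hγl : β < γ)
    (hlam : 0 < lam) (hC₁ : 0 < C₁) (hM : 0 ≤ M)
    (U : ℝ → ℝ → E →ₗ[ℝ] E) (w : ℝ → E)
    -- evolution bound of order β in the scale
    (hU : ∀ ⦃α' α : ℝ⦄, α₀ ≤ α' → α' < α → α ≤ αs → ∀ t s (y : E),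
      N α (U t s y) ≤ C₁ * (α - α') ^ (-β) * N α' y)
    -- `M` bounds the weighted norm `‖w‖^{(γ+1-β)}`
    (hw : ∀ α t, α₀ < α → α ≤ αs → 0 ≤ t → t < (α - α₀) / lam →
      (α - α₀ - lam * t) ^ (γ + 1 - β) * N α (w t) ≤ M)
    -- the scale norms are compatible with the Bochner integral
    (hint : ∀ α t, 0 ≤ t →
      N α (∫ s in (0:ℝ)..t, U t s (w s)) ≤ ∫ s in (0:ℝ)..t, N α (U t s (w s)))
    (hmeas : ∀ α t, IntervalIntegrable (fun s => N α (U t s (w s)))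
      MeasureTheory.volume 0 t) :
    ∀ α t, α₀ < α → α ≤ αs → 0 ≤ t → t < (α - α₀) / lam →
      (α - α₀ - lam * t) ^ γ * N α (∫ s in (0:ℝ)..t, U t s (w s)) ≤
        2 ^ γ * C₁ / ((γ - β) * lam) * M := by
  intro α t hα₀ hαs ht hts
  set d := α - α₀ - lam * t with hd_def
  have hd : 0 < d := by have := (lt_div_iff₀ hlam).mp hts; linarith
  set α' := α - d / 2 with hα'_def
  have hα'α : α' < α := by linarith
  have hα't : α' - α₀ - lam * t = d / 2 := by linarith
  have hα₀α' : α₀ < α' := by nlinarith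
  have hbound := integral_le_of_weighted_bound (f := fun s => N α (U t s (w s)))
    (g := fun s => N α' (w s)) (a := α' - α₀) (q := γ - β) (K := C₁ * (d / 2) ^ (-β))
    hlam (by linarith) ht (by linarith) (by positivity) hM (hmeas α t)
    (fun s _ => by simpa [α'] using hU (by linarith) hα'α hαs t s (w s))
    (fun s hs => by
      rw [show γ - β + 1 = γ + 1 - β by ring]
      exact hw α' s hα₀α' (by linarith) hs.1 ((lt_div_iff₀ hlam).mpr (by nlinarith [hs.2])))
  rw [hα't] at hbound
  calc d ^ γ * N α (∫ s in (0:ℝ)..t, U t s (w s))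
      ≤ d ^ γ * (C₁ * (d / 2) ^ (-β) * M * ((d / 2) ^ (-(γ - β)) / ((γ - β) * lam))) :=
        mul_le_mul_of_nonneg_left ((hint α t ht).trans hbound) (by positivity)
    _ = d ^ γ * ((d / 2) ^ (-β) * (d / 2) ^ (-(γ - β))) * C₁ / ((γ - β) * lam) * M := by
        ring
    _ = 2 ^ γ * C₁ / ((γ - β) * lam) * M := by rw [rpow_mul_half_rpow_neg hd]

theorem stmt7 (E : Type*) [NormedAddCommGroup E] [NormedSpace ℝ E] [CompleteSpace E]
    (N : ℝ → E → ℝ) (β γ lam C₁ α₀ αs M : ℝ)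
    (hβ0 : 0 ≤ β) (hβ : β < 1/2) (hγl : β < γ) (hγu : γ < 1 - β)
    (hlam : 0 < lam) (hC₁ : 0 < C₁) (hα : α₀ < αs) (hM : 0 ≤ M)
    (U : ℝ → ℝ → E →ₗ[ℝ] E) (w : ℝ → E)
    (hN : ∀ α (y : E), 0 ≤ N α y)
    -- evolution bound of order β in the scale
    (hU : ∀ ⦃α' α : ℝ⦄, α₀ ≤ α' → α' < α → α ≤ αs → ∀ t s (y : E),
      N α (U t s y) ≤ C₁ * (α - α') ^ (-β) * N α' y)
    -- `M` bounds the weighted norm `‖w‖^{(γ+1-β)}`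
    (hw : ∀ α t, α₀ < α → α ≤ αs → 0 ≤ t → t < (α - α₀) / lam →
      (α - α₀ - lam * t) ^ (γ + 1 - β) * N α (w t) ≤ M)
    -- the scale norms are compatible with the Bochner integral
    (hint : ∀ α t, 0 ≤ t →
      N α (∫ s in (0:ℝ)..t, U t s (w s)) ≤ ∫ s in (0:ℝ)..t, N α (U t s (w s)))
    (hmeas : ∀ α t, IntervalIntegrable (fun s => N α (U t s (w s)))
      MeasureTheory.volume 0 t) :
    ∀ α t, α₀ < α → α ≤ αs → 0 ≤ t → t < (α - α₀) / lam →
      (α - α₀ - lam * t) ^ γ * N α (∫ s in (0:ℝ)..t, U t s (w s)) ≤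
        2 ^ γ * C₁ / ((γ - β) * lam) * M :=
  stmt7_general E N β γ lam C₁ α₀ αs M hγl hlam hC₁ hM U w hU hw hint hmeas
end

section
/- Let β ∈ [0,1/2), γ ∈ (β,1-β), λ > 0, C₂ > 0, r ∈ (0,∞], and real α₀ < α*. Let B(·,t) satisfy ‖B(u,t) - B(v,t)‖_α ≤ C₂ (α-α')^{β-1} ‖u - v‖_{α'} for all α₀ ≤ α' < α ≤ α* and u, v in the ball of radius r around x in B_{α'}. Then for any u, v ∈ S^γ with ‖u - x‖^{(0)}, ‖v - x‖^{(0)} ≤ r, one has ‖B(u(·),·) - B(v(·),·)‖^{(γ+1-β)} ≤ 2^{γ+1-β} C₂ ‖u - v‖^{(γ)}. -/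
/-! Fix `(α, t)` with weight `d = α - α₀ - λt > 0` and evaluate everything at the midpoint
`α' = α - d/2`. There `α - α' = d/2` and the weight of `(α', t)` is again `d/2`, so the
Lipschitz bound gives `N_α(Bu - Bv) ≤ C₂ (d/2)^{β-1} (d/2)^{-γ} M`; multiplying by
`d^{γ+1-β}` cancels every power of `d` and leaves `2^{γ+1-β} C₂ M`. -/

lemma lt_div_iff_sub_mul_pos {lam α α₀ t : ℝ} (hlam : 0 < lam) :
    t < (α - α₀) / lam ↔ 0 < α - α₀ - lam * t := by
  rw [lt_div_iff₀ hlam]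
  constructor <;> intro h <;> linarith

lemma le_rpow_neg_mul_of_rpow_mul_le {w a M γ : ℝ} (hw : 0 < w) (h : w ^ γ * a ≤ M) :
    a ≤ w ^ (-γ) * M := by
  have hwγ : 0 < w ^ γ := Real.rpow_pos_of_pos hw γ
  rw [Real.rpow_neg hw.le, inv_mul_eq_div, le_div_iff₀ hwγ, mul_comm]
  exact h

lemma rpow_mul_half_rpow_mul_half_rpow_neg {d : ℝ} (hd : 0 < d) (β γ : ℝ) :
    d ^ (γ + 1 - β) * ((d / 2) ^ (β - 1) * (d / 2) ^ (-γ)) = 2 ^ (γ + 1 - β) := by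
  have hd2 : 0 < d / 2 := half_pos hd
  rw [← Real.rpow_add hd2, show β - 1 + -γ = -(γ + 1 - β) by ring, Real.rpow_neg hd2.le,
    ← div_eq_mul_inv, ← Real.div_rpow hd.le hd2.le, div_div_cancel₀ hd.ne']

theorem stmt8_general (E : Type*) [AddCommGroup E] (N : ℝ → E → ℝ)
    (β γ lam C₂ α₀ αs M : ℝ) (r : ENNReal)
    (hlam : 0 < lam) (hC₂ : 0 < C₂)
    (x : E) (B : E → ℝ → E) (u v : ℝ → E)
    -- Ovcyannikov-type Lipschitz bound on the ball of radius `r` around `x`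
    (hLip : ∀ ⦃α' α : ℝ⦄, α₀ ≤ α' → α' < α → α ≤ αs → ∀ t (y z : E),
      ENNReal.ofReal (N α' (y - x)) ≤ r → ENNReal.ofReal (N α' (z - x)) ≤ r →
      N α (B y t - B z t) ≤ C₂ * (α - α') ^ (β - 1) * N α' (y - z))
    -- `‖u - x‖^{(0)} ≤ r` and `‖v - x‖^{(0)} ≤ r`
    (hu : ∀ α t, α₀ < α → α ≤ αs → 0 ≤ t → t < (α - α₀) / lam →
      ENNReal.ofReal (N α (u t - x)) ≤ r)
    (hv : ∀ α t, α₀ < α → α ≤ αs → 0 ≤ t → t < (α - α₀) / lam →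
      ENNReal.ofReal (N α (v t - x)) ≤ r)
    -- `M` bounds the weighted norm `‖u - v‖^{(γ)}`
    (huv : ∀ α t, α₀ < α → α ≤ αs → 0 ≤ t → t < (α - α₀) / lam →
      (α - α₀ - lam * t) ^ γ * N α (u t - v t) ≤ M) :
    ∀ α t, α₀ < α → α ≤ αs → 0 ≤ t → t < (α - α₀) / lam →
      (α - α₀ - lam * t) ^ (γ + 1 - β) * N α (B (u t) t - B (v t) t) ≤
        2 ^ (γ + 1 - β) * C₂ * M := by
  intro α t _ hαs ht0 ht
  set d := α - α₀ - lam * t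
  have hd : 0 < d := (lt_div_iff_sub_mul_pos hlam).1 ht
  set α' := α - d / 2
  have hweight' : α' - α₀ - lam * t = d / 2 := by ring
  have hα'α : α' < α := by linarith
  have hα₀α' : α₀ < α' := by nlinarith
  have ht' : t < (α' - α₀) / lam := (lt_div_iff_sub_mul_pos hlam).2 (by linarith)
  have hLip' := hLip hα₀α'.le hα'α hαs t (u t) (v t)
    (hu α' t hα₀α' (by linarith) ht0 ht') (hv α' t hα₀α' (by linarith) ht0 ht')
  have huv' : N α' (u t - v t) ≤ (d / 2) ^ (-γ) * M :=
    le_rpow_neg_mul_of_rpow_mul_le (half_pos hd)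
      (hweight' ▸ huv α' t hα₀α' (by linarith) ht0 ht')
  rw [show α - α' = d / 2 by ring] at hLip'
  have hcoef : 0 ≤ C₂ * (d / 2) ^ (β - 1) := by positivity
  calc d ^ (γ + 1 - β) * N α (B (u t) t - B (v t) t)
      ≤ d ^ (γ + 1 - β) * (C₂ * (d / 2) ^ (β - 1) * ((d / 2) ^ (-γ) * M)) := by
        gcongr
        exact hLip'.trans (mul_le_mul_of_nonneg_left huv' hcoef)
    _ = C₂ * M * (d ^ (γ + 1 - β) * ((d / 2) ^ (β - 1) * (d / 2) ^ (-γ))) := by ring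
    _ = 2 ^ (γ + 1 - β) * C₂ * M := by
        rw [rpow_mul_half_rpow_mul_half_rpow_neg hd]; ring

theorem stmt8 (E : Type*) [AddCommGroup E] (N : ℝ → E → ℝ)
    (β γ lam C₂ α₀ αs M : ℝ) (r : ENNReal)
    (hβ0 : 0 ≤ β) (hβ : β < 1/2) (hγl : β < γ) (hγu : γ < 1 - β)
    (hlam : 0 < lam) (hC₂ : 0 < C₂) (hα : α₀ < αs) (hr : 0 < r) (hM : 0 ≤ M)
    (hN : ∀ α (y : E), 0 ≤ N α y)
    (x : E) (B : E → ℝ → E) (u v : ℝ → E)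
    -- Ovcyannikov-type Lipschitz bound on the ball of radius `r` around `x`
    (hLip : ∀ ⦃α' α : ℝ⦄, α₀ ≤ α' → α' < α → α ≤ αs → ∀ t (y z : E),
      ENNReal.ofReal (N α' (y - x)) ≤ r → ENNReal.ofReal (N α' (z - x)) ≤ r →
      N α (B y t - B z t) ≤ C₂ * (α - α') ^ (β - 1) * N α' (y - z))
    -- `‖u - x‖^{(0)} ≤ r` and `‖v - x‖^{(0)} ≤ r`
    (hu : ∀ α t, α₀ < α → α ≤ αs → 0 ≤ t → t < (α - α₀) / lam →
      ENNReal.ofReal (N α (u t - x)) ≤ r)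
    (hv : ∀ α t, α₀ < α → α ≤ αs → 0 ≤ t → t < (α - α₀) / lam →
      ENNReal.ofReal (N α (v t - x)) ≤ r)
    -- `M` bounds the weighted norm `‖u - v‖^{(γ)}`
    (huv : ∀ α t, α₀ < α → α ≤ αs → 0 ≤ t → t < (α - α₀) / lam →
      (α - α₀ - lam * t) ^ γ * N α (u t - v t) ≤ M) :
    ∀ α t, α₀ < α → α ≤ αs → 0 ≤ t → t < (α - α₀) / lam →
      (α - α₀ - lam * t) ^ (γ + 1 - β) * N α (B (u t) t - B (v t) t) ≤
        2 ^ (γ + 1 - β) * C₂ * M :=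
  stmt8_general E N β γ lam C₂ α₀ αs M r hlam hC₂ x B u v hLip hu hv huv
end

section
/- Under the combined hypotheses of the two preceding estimates (evolution bound of order β and Lipschitz bound of order 1-β), the operator 𝒯(u)(t) = ∫₀ᵗ U(t,s) B(u(s),s) ds satisfies, for all u, v ∈ S^γ with ‖u-x‖^{(0)}, ‖v-x‖^{(0)} ≤ r, the contraction estimate ‖𝒯(u) - 𝒯(v)‖^{(γ)} ≤ (2^{2γ+1-β} C₁ C₂ / ((γ-β)λ)) ‖u - v‖^{(γ)}. In particular, if λ > 2^{2γ+1-β} C₁ C₂/(γ-β) then 𝒯 is a strict contraction on the set {u ∈ S^γ : ‖u-x‖^{(0)} ≤ r}. -/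
/-!
Fix `α`, `t` and the gap `d = α - α₀ - λt`. For `s ∈ [0, t]`, descend from `α` to `α - d/2` with the
evolution bound and then to `α'' = α - d/2 - g(s)`, `g(s) = d/4 + λ(t - s)/2`, with the Lipschitz
bound; `α''` is chosen so that its own gap at time `s` is exactly `g(s)`, so the weighted bound on
`u - v` costs `g(s)^(-γ)`. The integrand is thus at most `C₁ C₂ M (d/2)^(-β) g(s)^(β-γ-1)`, whose
integral over `[0, t]` is at most `2 (d/4)^(β-γ) / ((γ - β) λ)` because `γ > β`; multiplying by `d^γ`
collects the powers of `d` into `2^(2γ-β)`.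
-/

open MeasureTheory

lemma intervalIntegrable_rpow_affine {a b t : ℝ} (p : ℝ) (ha : 0 < a) (hb : 0 ≤ b) (ht : 0 ≤ t) :
    IntervalIntegrable (fun s => (a + b * (t - s)) ^ p) volume 0 t := by
  refine ContinuousOn.intervalIntegrable (ContinuousOn.rpow_const (by fun_prop) fun s hs => ?_)
  rw [Set.uIcc_of_le ht] at hs
  left
  nlinarith [hs.2]

lemma integral_rpow_affine_le {a b t q : ℝ} (ha : 0 < a) (hb : 0 < b) (ht : 0 ≤ t) (hq : 0 < q) :
    ∫ s in (0:ℝ)..t, (a + b * (t - s)) ^ (-q - 1) ≤ a ^ (-q) / (q * b) := by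
  have hpos : ∀ s ∈ Set.uIcc 0 t, 0 < a + b * (t - s) := by
    intro s hs
    rw [Set.uIcc_of_le ht] at hs
    nlinarith [hs.2]
  have hderiv : ∀ s ∈ Set.uIcc 0 t, HasDerivAt (fun y => (a + b * (t - y)) ^ (-q) / (q * b))
      ((a + b * (t - s)) ^ (-q - 1)) s := by
    intro s hs
    have h := (((hasDerivAt_id' s).const_sub t).const_mul b).const_add a
      |>.rpow_const (p := -q) (Or.inl (hpos s hs).ne') |>.div_const (q * b)
    refine h.congr_deriv ?_
    field_simp
  rw [intervalIntegral.integral_eq_sub_of_hasDerivAt hderiv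
    (intervalIntegrable_rpow_affine _ ha hb.le ht)]
  simp only [sub_self, mul_zero, add_zero, sub_zero]
  have : 0 ≤ (a + b * t) ^ (-q) / (q * b) := by positivity
  linarith

lemma rpow_mul_rpow_half_mul_rpow_quarter {d : ℝ} (hd : 0 < d) (β γ : ℝ) :
    d ^ γ * (d / 2) ^ (-β) * (d / 4) ^ (β - γ) = 2 ^ (2 * γ - β) := by
  have hlog4 : Real.log 4 = 2 * Real.log 2 := by
    rw [show (4 : ℝ) = 2 ^ 2 by norm_num, Real.log_pow]; norm_num
  simp only [Real.rpow_def_of_pos hd, Real.rpow_def_of_pos (half_pos hd),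
    Real.rpow_def_of_pos (by positivity : 0 < d / 4), Real.rpow_def_of_pos two_pos,
    ← Real.exp_add, Real.log_div hd.ne' two_ne_zero, Real.log_div hd.ne' four_ne_zero, hlog4]
  ring_nf

section Scale

variable {E : Type*} [AddCommGroup E] [Module ℝ E]

def ScaleEvolutionBound (N : ℝ → E → ℝ) (α₀ αs C₁ β : ℝ) (U : ℝ → ℝ → E →ₗ[ℝ] E) : Prop :=
  ∀ ⦃α' α : ℝ⦄, α₀ ≤ α' → α' < α → α ≤ αs → ∀ t s (y : E),
    N α (U t s y) ≤ C₁ * (α - α') ^ (-β) * N α' y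

def ScaleLipschitzOnBall (N : ℝ → E → ℝ) (α₀ αs C₂ β : ℝ) (x : E) (r : ENNReal)
    (B : E → ℝ → E) : Prop :=
  ∀ ⦃α' α : ℝ⦄, α₀ ≤ α' → α' < α → α ≤ αs → ∀ t (y z : E),
    ENNReal.ofReal (N α' (y - x)) ≤ r → ENNReal.ofReal (N α' (z - x)) ≤ r →
    N α (B y t - B z t) ≤ C₂ * (α - α') ^ (β - 1) * N α' (y - z)

/-- `‖u - x‖^{(0)} ≤ r`. -/
def InScaleBall (N : ℝ → E → ℝ) (α₀ αs lam : ℝ) (x : E) (r : ENNReal) (u : ℝ → E) : Prop :=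
  ∀ α t, α₀ < α → α ≤ αs → 0 ≤ t → t < (α - α₀) / lam → ENNReal.ofReal (N α (u t - x)) ≤ r

/-- `‖w‖^{(γ)} ≤ M`. -/
def WeightedNormLE (N : ℝ → E → ℝ) (α₀ αs lam γ : ℝ) (w : ℝ → E) (M : ℝ) : Prop :=
  ∀ α t, α₀ < α → α ≤ αs → 0 ≤ t → t < (α - α₀) / lam →
    (α - α₀ - lam * t) ^ γ * N α (w t) ≤ M

variable {N : ℝ → E → ℝ} {α₀ αs lam β γ C₁ C₂ M : ℝ} {x : E} {r : ENNReal}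
  {U : ℝ → ℝ → E →ₗ[ℝ] E} {B : E → ℝ → E} {u v : ℝ → E}

lemma norm_evol_sub_le (hlam : 0 < lam) (hC₁ : 0 ≤ C₁) (hC₂ : 0 ≤ C₂)
    (hU : ScaleEvolutionBound N α₀ αs C₁ β U) (hB : ScaleLipschitzOnBall N α₀ αs C₂ β x r B)
    (hu : InScaleBall N α₀ αs lam x r u) (hv : InScaleBall N α₀ αs lam x r v)
    (huv : WeightedNormLE N α₀ αs lam γ (u - v) M) {α t s : ℝ} (hα : α ≤ αs)
    (hd : 0 < α - α₀ - lam * t) (hs₀ : 0 ≤ s) (hst : s ≤ t) :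
    N α (U t s (B (u s) s) - U t s (B (v s) s)) ≤
      C₁ * C₂ * M * ((α - α₀ - lam * t) / 2) ^ (-β) *
        ((α - α₀ - lam * t) / 4 + lam / 2 * (t - s)) ^ (-(γ - β) - 1) := by
  set d := α - α₀ - lam * t with hd_def
  set g := d / 4 + lam / 2 * (t - s) with hg_def
  have hg : 0 < g := by nlinarith
  have hgap : α - d / 2 - g - α₀ - lam * s = g := by rw [hg_def, hd_def]; ring
  have hα₀ : α₀ < α - d / 2 - g := by nlinarith
  have hs : s < (α - d / 2 - g - α₀) / lam := by rw [lt_div_iff₀ hlam]; nlinarith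
  have hdiff : N (α - d / 2 - g) (u s - v s) ≤ M * g ^ (-γ) := by
    have h := huv _ s hα₀ (by linarith) hs₀ hs
    rw [Pi.sub_apply, hgap] at h
    rw [Real.rpow_neg hg.le, ← div_eq_mul_inv, le_div_iff₀ (by positivity), mul_comm]
    exact h
  have hU' := hU (α' := α - d / 2) (α := α) (by linarith) (by linarith) hα t s
    (B (u s) s - B (v s) s)
  have hB' := hB (α' := α - d / 2 - g) (α := α - d / 2) hα₀.le (by linarith) (by linarith) s
    (u s) (v s) (hu _ s hα₀ (by linarith) hs₀ hs) (hv _ s hα₀ (by linarith) hs₀ hs)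
  rw [sub_sub_cancel] at hU'
  rw [sub_sub_cancel] at hB'
  calc N α (U t s (B (u s) s) - U t s (B (v s) s))
      = N α (U t s (B (u s) s - B (v s) s)) := by rw [map_sub]
    _ ≤ C₁ * (d / 2) ^ (-β) * (C₂ * g ^ (β - 1) * (M * g ^ (-γ))) := by
      refine hU'.trans (mul_le_mul_of_nonneg_left (hB'.trans ?_) (by positivity))
      exact mul_le_mul_of_nonneg_left hdiff (by positivity)
    _ = C₁ * C₂ * M * (d / 2) ^ (-β) * g ^ (-(γ - β) - 1) := by
      rw [show -(γ - β) - 1 = (β - 1) + -γ by ring, Real.rpow_add hg]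
      ring

end Scale

section Integral

variable {E : Type*} [NormedAddCommGroup E] [NormedSpace ℝ E]
  {N : ℝ → E → ℝ} {α₀ αs lam β γ C₁ C₂ M : ℝ} {x : E} {r : ENNReal}
  {U : ℝ → ℝ → E →ₗ[ℝ] E} {B : E → ℝ → E} {u v : ℝ → E}

lemma weightedNormLE_integral_evol_sub (hlam : 0 < lam) (hβγ : β < γ) (hC₁ : 0 ≤ C₁)
    (hC₂ : 0 ≤ C₂) (hM : 0 ≤ M)
    (hU : ScaleEvolutionBound N α₀ αs C₁ β U) (hB : ScaleLipschitzOnBall N α₀ αs C₂ β x r B)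
    (hu : InScaleBall N α₀ αs lam x r u) (hv : InScaleBall N α₀ αs lam x r v)
    (huv : WeightedNormLE N α₀ αs lam γ (u - v) M)
    (hIu : ∀ t, IntervalIntegrable (fun s => U t s (B (u s) s)) volume 0 t)
    (hIv : ∀ t, IntervalIntegrable (fun s => U t s (B (v s) s)) volume 0 t)
    (hint : ∀ α t, 0 ≤ t →
      N α (∫ s in (0:ℝ)..t, (U t s (B (u s) s) - U t s (B (v s) s))) ≤
        ∫ s in (0:ℝ)..t, N α (U t s (B (u s) s) - U t s (B (v s) s)))
    (hmeas : ∀ α t, IntervalIntegrable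
      (fun s => N α (U t s (B (u s) s) - U t s (B (v s) s))) volume 0 t) :
    WeightedNormLE N α₀ αs lam γ
      (fun t => (∫ s in (0:ℝ)..t, U t s (B (u s) s)) - ∫ s in (0:ℝ)..t, U t s (B (v s) s))
      (2 ^ (2 * γ + 1 - β) * C₁ * C₂ / ((γ - β) * lam) * M) := by
  intro α t hα₀ hα ht₀ ht
  have hd : 0 < α - α₀ - lam * t := by rw [lt_div_iff₀ hlam] at ht; linarith
  set d := α - α₀ - lam * t
  set K := C₁ * C₂ * M * (d / 2) ^ (-β)
  have hβγ' : 0 < γ - β := sub_pos.mpr hβγ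
  have hbound : N α ((∫ s in (0:ℝ)..t, U t s (B (u s) s)) - ∫ s in (0:ℝ)..t, U t s (B (v s) s))
      ≤ K * ((d / 4) ^ (-(γ - β)) / ((γ - β) * (lam / 2))) := calc
    _ = N α (∫ s in (0:ℝ)..t, (U t s (B (u s) s) - U t s (B (v s) s))) := by
      rw [intervalIntegral.integral_sub (hIu t) (hIv t)]
    _ ≤ ∫ s in (0:ℝ)..t, N α (U t s (B (u s) s) - U t s (B (v s) s)) := hint α t ht₀
    _ ≤ ∫ s in (0:ℝ)..t, K * (d / 4 + lam / 2 * (t - s)) ^ (-(γ - β) - 1) :=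
      intervalIntegral.integral_mono_on ht₀ (hmeas α t)
        ((intervalIntegrable_rpow_affine _ (by positivity) (by positivity) ht₀).const_mul K)
        fun s hs => norm_evol_sub_le hlam hC₁ hC₂ hU hB hu hv huv hα hd hs.1 hs.2
    _ = K * ∫ s in (0:ℝ)..t, (d / 4 + lam / 2 * (t - s)) ^ (-(γ - β) - 1) :=
      intervalIntegral.integral_const_mul _ _
    _ ≤ K * ((d / 4) ^ (-(γ - β)) / ((γ - β) * (lam / 2))) := by
      gcongr
      exact integral_rpow_affine_le (by positivity) (by positivity) ht₀ hβγ'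
  calc d ^ γ * N α ((∫ s in (0:ℝ)..t, U t s (B (u s) s)) - ∫ s in (0:ℝ)..t, U t s (B (v s) s))
      ≤ d ^ γ * (K * ((d / 4) ^ (-(γ - β)) / ((γ - β) * (lam / 2)))) := by gcongr
    _ = C₁ * C₂ * M * (d ^ γ * (d / 2) ^ (-β) * (d / 4) ^ (β - γ)) * 2 / ((γ - β) * lam) := by
      simp only [K, neg_sub]; field_simp
    _ = 2 ^ (2 * γ + 1 - β) * C₁ * C₂ / ((γ - β) * lam) * M := by
      rw [rpow_mul_rpow_half_mul_rpow_quarter hd, show 2 * γ + 1 - β = 2 * γ - β + 1 by ring,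
        Real.rpow_add_one two_ne_zero]
      ring

end Integral

theorem stmt9_general (E : Type*) [NormedAddCommGroup E] [NormedSpace ℝ E]
    (N : ℝ → E → ℝ) (β γ lam C₁ C₂ α₀ αs M : ℝ) (r : ENNReal)
    (hγl : β < γ)
    (hlam : 0 < lam) (hC₁ : 0 < C₁) (hC₂ : 0 < C₂)
    (hM : 0 ≤ M)
    (x : E) (U : ℝ → ℝ → E →ₗ[ℝ] E) (B : E → ℝ → E) (u v : ℝ → E)
    -- evolution bound of order β in the scale
    (hU : ∀ ⦃α' α : ℝ⦄, α₀ ≤ α' → α' < α → α ≤ αs → ∀ t s (y : E),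
      N α (U t s y) ≤ C₁ * (α - α') ^ (-β) * N α' y)
    -- Ovcyannikov-type Lipschitz bound of order 1-β on the ball of radius `r` around `x`
    (hLip : ∀ ⦃α' α : ℝ⦄, α₀ ≤ α' → α' < α → α ≤ αs → ∀ t (y z : E),
      ENNReal.ofReal (N α' (y - x)) ≤ r → ENNReal.ofReal (N α' (z - x)) ≤ r →
      N α (B y t - B z t) ≤ C₂ * (α - α') ^ (β - 1) * N α' (y - z))
    -- `‖u - x‖^{(0)} ≤ r` and `‖v - x‖^{(0)} ≤ r`
    (hu : ∀ α t, α₀ < α → α ≤ αs → 0 ≤ t → t < (α - α₀) / lam →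
      ENNReal.ofReal (N α (u t - x)) ≤ r)
    (hv : ∀ α t, α₀ < α → α ≤ αs → 0 ≤ t → t < (α - α₀) / lam →
      ENNReal.ofReal (N α (v t - x)) ≤ r)
    -- `M` bounds the weighted norm `‖u - v‖^{(γ)}`
    (huv : ∀ α t, α₀ < α → α ≤ αs → 0 ≤ t → t < (α - α₀) / lam →
      (α - α₀ - lam * t) ^ γ * N α (u t - v t) ≤ M)
    -- integrability of the integrands defining `𝒯(u)` and `𝒯(v)`
    (hIu : ∀ t, IntervalIntegrable (fun s => U t s (B (u s) s))
      MeasureTheory.volume 0 t)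
    (hIv : ∀ t, IntervalIntegrable (fun s => U t s (B (v s) s))
      MeasureTheory.volume 0 t)
    -- the scale norms are compatible with the Bochner integral
    (hint : ∀ α t, 0 ≤ t →
      N α (∫ s in (0:ℝ)..t, (U t s (B (u s) s) - U t s (B (v s) s))) ≤
        ∫ s in (0:ℝ)..t, N α (U t s (B (u s) s) - U t s (B (v s) s)))
    (hmeas : ∀ α t, IntervalIntegrable
      (fun s => N α (U t s (B (u s) s) - U t s (B (v s) s)))
      MeasureTheory.volume 0 t) :
    -- contraction estimate for `𝒯(u)(t) = ∫₀ᵗ U(t,s) B(u(s),s) ds`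
    (∀ α t, α₀ < α → α ≤ αs → 0 ≤ t → t < (α - α₀) / lam →
      (α - α₀ - lam * t) ^ γ *
        N α ((∫ s in (0:ℝ)..t, U t s (B (u s) s)) -
             (∫ s in (0:ℝ)..t, U t s (B (v s) s))) ≤
        2 ^ (2 * γ + 1 - β) * C₁ * C₂ / ((γ - β) * lam) * M) ∧
    -- strict contraction when λ is large enough
    (2 ^ (2 * γ + 1 - β) * C₁ * C₂ / (γ - β) < lam →
      2 ^ (2 * γ + 1 - β) * C₁ * C₂ / ((γ - β) * lam) < 1) := by
  refine ⟨weightedNormLE_integral_evol_sub hlam hγl hC₁.le hC₂.le hM hU hLip hu hv huv hIu hIv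
    hint hmeas, fun h => ?_⟩
  rw [← div_div]
  exact (div_lt_one hlam).mpr h

theorem stmt9 (E : Type*) [NormedAddCommGroup E] [NormedSpace ℝ E] [CompleteSpace E]
    (N : ℝ → E → ℝ) (β γ lam C₁ C₂ α₀ αs M : ℝ) (r : ENNReal)
    (hβ0 : 0 ≤ β) (hβ : β < 1/2) (hγl : β < γ) (hγu : γ < 1 - β)
    (hlam : 0 < lam) (hC₁ : 0 < C₁) (hC₂ : 0 < C₂) (hα : α₀ < αs)
    (hr : 0 < r) (hM : 0 ≤ M)
    (hN : ∀ α (y : E), 0 ≤ N α y)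
    (x : E) (U : ℝ → ℝ → E →ₗ[ℝ] E) (B : E → ℝ → E) (u v : ℝ → E)
    -- evolution bound of order β in the scale
    (hU : ∀ ⦃α' α : ℝ⦄, α₀ ≤ α' → α' < α → α ≤ αs → ∀ t s (y : E),
      N α (U t s y) ≤ C₁ * (α - α') ^ (-β) * N α' y)
    -- Ovcyannikov-type Lipschitz bound of order 1-β on the ball of radius `r` around `x`
    (hLip : ∀ ⦃α' α : ℝ⦄, α₀ ≤ α' → α' < α → α ≤ αs → ∀ t (y z : E),
      ENNReal.ofReal (N α' (y - x)) ≤ r → ENNReal.ofReal (N α' (z - x)) ≤ r →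
      N α (B y t - B z t) ≤ C₂ * (α - α') ^ (β - 1) * N α' (y - z))
    -- `‖u - x‖^{(0)} ≤ r` and `‖v - x‖^{(0)} ≤ r`
    (hu : ∀ α t, α₀ < α → α ≤ αs → 0 ≤ t → t < (α - α₀) / lam →
      ENNReal.ofReal (N α (u t - x)) ≤ r)
    (hv : ∀ α t, α₀ < α → α ≤ αs → 0 ≤ t → t < (α - α₀) / lam →
      ENNReal.ofReal (N α (v t - x)) ≤ r)
    -- `M` bounds the weighted norm `‖u - v‖^{(γ)}`
    (huv : ∀ α t, α₀ < α → α ≤ αs → 0 ≤ t → t < (α - α₀) / lam →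
      (α - α₀ - lam * t) ^ γ * N α (u t - v t) ≤ M)
    -- integrability of the integrands defining `𝒯(u)` and `𝒯(v)`
    (hIu : ∀ t, IntervalIntegrable (fun s => U t s (B (u s) s))
      MeasureTheory.volume 0 t)
    (hIv : ∀ t, IntervalIntegrable (fun s => U t s (B (v s) s))
      MeasureTheory.volume 0 t)
    -- the scale norms are compatible with the Bochner integral
    (hint : ∀ α t, 0 ≤ t →
      N α (∫ s in (0:ℝ)..t, (U t s (B (u s) s) - U t s (B (v s) s))) ≤
        ∫ s in (0:ℝ)..t, N α (U t s (B (u s) s) - U t s (B (v s) s)))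
    (hmeas : ∀ α t, IntervalIntegrable
      (fun s => N α (U t s (B (u s) s) - U t s (B (v s) s)))
      MeasureTheory.volume 0 t) :
    -- contraction estimate for `𝒯(u)(t) = ∫₀ᵗ U(t,s) B(u(s),s) ds`
    (∀ α t, α₀ < α → α ≤ αs → 0 ≤ t → t < (α - α₀) / lam →
      (α - α₀ - lam * t) ^ γ *
        N α ((∫ s in (0:ℝ)..t, U t s (B (u s) s)) -
             (∫ s in (0:ℝ)..t, U t s (B (v s) s))) ≤
        2 ^ (2 * γ + 1 - β) * C₁ * C₂ / ((γ - β) * lam) * M) ∧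
    -- strict contraction when λ is large enough
    (2 ^ (2 * γ + 1 - β) * C₁ * C₂ / (γ - β) < lam →
      2 ^ (2 * γ + 1 - β) * C₁ * C₂ / ((γ - β) * lam) < 1) :=
  stmt9_general E N β γ lam C₁ C₂ α₀ αs M r hγl hlam hC₁ hC₂ hM x U B u v hU hLip hu hv huv hIu hIv
    hint hmeas
end
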